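/- Let |A| ≥ 2 and NC_I ⊆ A^I be the set of non-constant sequences, with |I| ≥ 2. A simplicial complex over I generates NC_I if and only if it is connected; the minimal generating complexes are the spanning trees of I. -/

import Mathlib

/-- `W` determines output coordinate `i` of `f`: the value `f x i` only
depends on the restriction of `x` to `W`. -/
def Determines {B J A I : Type*} (f : (J → B) → (I → A)) (i : I) (W : Set J) : Prop :=
  ∀ x y : J → B, (∀ j ∈ W, x j = y j) → f x i = f y i

/-- The input window of output coordinate `i`: the intersection of all
determining sets (which, for finite data, is the smallest determining set). -/
def window {B J A I : Type*} (f : (J → B) → (I → A)) (i : I) : Set J :=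
  ⋂₀ {W : Set J | Determines f i W}

/-- The dual window of an input coordinate `j`. -/
def dualWindow {B J A I : Type*} (f : (J → B) → (I → A)) (j : J) : Set I :=
  {i : I | j ∈ window f i}

/-- The communication complex of `f`: `S ∈ K_f` iff `⋂_{i ∈ S} W_f(i) ≠ ∅`
(the empty intersection being all of `J`). -/
def commComplex {B J A I : Type*} (f : (J → B) → (I → A)) : Set (Set I) :=
  {S : Set I | (⋂ i ∈ S, window f i).Nonempty}

/-- A complex `K` over `I` generates the language `L ⊆ A^I` if some function
`f : B^J → A^I` (with `B, J` finite, `J` nonempty) has image `L` and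
communication complex contained in `K`. -/
def Generates {A I : Type*} (K : Set (Set I)) (L : Set (I → A)) : Prop :=
  ∃ (B J : Type) (_ : Finite B) (_ : Finite J) (_ : Nonempty J)
    (f : (J → B) → (I → A)), Set.range f = L ∧ commComplex f ⊆ K

/-- A complex is connected if no nontrivial partition of the vertex set splits
all of its simplices. -/
def ConnectedComplex {I : Type*} (K : Set (Set I)) : Prop :=
  ¬ ∃ I0 : Set I, I0 ≠ ∅ ∧ I0 ≠ Set.univ ∧ ∀ S ∈ K, S ⊆ I0 ∨ S ⊆ I0ᶜ

/-- A simplicial complex: a downward closed collection of subsets. -/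
def IsComplex {I : Type*} (K : Set (Set I)) : Prop :=
  ∀ S ∈ K, ∀ T ⊆ S, T ∈ K

/-- The 1-skeleton of a complex, as a simple graph. -/
def skeletonGraph {I : Type*} (K : Set (Set I)) : SimpleGraph I :=
  SimpleGraph.fromRel (fun i j => ({i, j} : Set I) ∈ K)

/-- The complex associated to a graph: the empty set, the singletons, and the
edges. -/
def treeComplex {I : Type*} (G : SimpleGraph I) : Set (Set I) :=
  {S | S = ∅ ∨ (∃ i, S = {i}) ∨ ∃ i j, G.Adj i j ∧ S = ({i, j} : Set I)}

/-- The maximal simplices of a complex. -/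
def maxSimplices {I : Type*} (K : Set (Set I)) : Set (Set I) :=
  {S | S ∈ K ∧ ∀ T ∈ K, S ⊆ T → S = T}

/-- The image `f_*(K)` of a complex `K` on the input coordinates of `f`:
generated by the unions of dual windows over simplices of `K`. -/
def pushComplex {B J A I : Type*} (f : (J → B) → (I → A)) (K : Set (Set J)) : Set (Set I) :=
  {T : Set I | ∃ S ∈ K, T ⊆ ⋃ j ∈ S, dualWindow f j}

/-
A complex that generates the non-constant sequences is connected: if a partition `I₀ ⊔ I₀ᶜ`
splits every simplex, then the input windows of `I₀` and of `I₀ᶜ` are disjoint, so two preimages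
of non-constant sequences can be glued into an input whose image is constant.

Conversely, along a rooted spanning tree of the 1-skeleton, let every vertex read its own input
and those of its children. An input is a value together with a flag, the claim "my subtree is
not constant", which is forced at the root. A vertex whose claim is refuted by its children
(none of them claims and all of them agree with it) outputs a value different from its own; any
other vertex outputs its own value. A deepest claiming vertex then always disagrees with one of
its children in the output, while an honest flagging of a non-constant sequence refutes nobody
and is reproduced verbatim. Each input is read by a vertex and its parent only, so the
communication complex lies in the tree complex.

Minimality: a tree complex generates, and a generating subcomplex of it must contain every edge,
since each tree edge is a bridge.
-/

open Function Relation

section Window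

variable {B J A I : Type*} {f : (J → B) → (I → A)} {i : I}

lemma determines_univ (f : (J → B) → (I → A)) (i : I) : Determines f i Set.univ :=
  fun x y h => by rw [funext fun j => h j trivial]

lemma Determines.inter {W₁ W₂ : Set J} (h₁ : Determines f i W₁) (h₂ : Determines f i W₂) :
    Determines f i (W₁ ∩ W₂) := by
  classical
  intro x y hxy
  calc f x i = f (W₁.piecewise x y) i := h₁ _ _ fun j hj => (W₁.piecewise_eq_of_mem _ _ hj).symm
    _ = f y i := h₂ _ _ fun j hj => by
      by_cases hj₁ : j ∈ W₁
      · rw [W₁.piecewise_eq_of_mem _ _ hj₁, hxy j ⟨hj₁, hj⟩]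
      · rw [W₁.piecewise_eq_of_notMem _ _ hj₁]

lemma determines_window [Finite J] (f : (J → B) → (I → A)) (i : I) :
    Determines f i (window f i) := by
  refine Set.Finite.induction_on
    (motive := fun D _ => (∀ W ∈ D, Determines f i W) → Determines f i (⋂₀ D))
    _ (Set.toFinite {W : Set J | Determines f i W}) (fun _ => by simpa using determines_univ f i)
    ?_ fun _ hW => hW
  intro W D _ _ ih h
  rw [Set.sInter_insert]
  exact (h W (Set.mem_insert _ _)).inter (ih fun W' hW' => h W' (Set.mem_insert_of_mem _ hW'))

lemma window_subset_of_determines {W : Set J} (h : Determines f i W) : window f i ⊆ W :=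
  Set.sInter_subset_of_mem h

lemma window_nonempty_of_apply_ne [Finite J] {x y : J → B} (h : f x i ≠ f y i) :
    (window f i).Nonempty := by
  rw [Set.nonempty_iff_ne_empty]
  intro hempty
  have hdet := determines_window f i
  rw [hempty] at hdet
  exact h (hdet x y fun _ hj => hj.elim)

lemma empty_mem_commComplex [Nonempty J] (f : (J → B) → (I → A)) : ∅ ∈ commComplex f := by
  simp [commComplex]

lemma singleton_mem_commComplex [Finite J] {x y : J → B} (h : f x i ≠ f y i) :
    {i} ∈ commComplex f := by
  simpa only [commComplex, Set.mem_ofPred_eq, Set.biInter_singleton] using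
    window_nonempty_of_apply_ne h

lemma pair_mem_commComplex {i' : I} {j : J} (hj : j ∈ window f i) (hj' : j ∈ window f i') :
    {i, i'} ∈ commComplex f :=
  ⟨j, by simp [hj, hj']⟩

lemma exists_apply_eq_of_disjoint_window [Finite J] (I₀ : Set I)
    (hdisj : ∀ i ∈ I₀, ∀ i' ∉ I₀, Disjoint (window f i) (window f i')) (u v : J → B) :
    ∃ w, (∀ i ∈ I₀, f w i = f u i) ∧ ∀ i ∉ I₀, f w i = f v i := by
  classical
  set J₀ := ⋃ i ∈ I₀, window f i
  refine ⟨J₀.piecewise u v, fun i hi => determines_window f i _ _ fun j hj => ?_,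
    fun i hi => determines_window f i _ _ fun j hj => ?_⟩
  · exact J₀.piecewise_eq_of_mem _ _ (Set.mem_biUnion hi hj)
  · refine J₀.piecewise_eq_of_notMem _ _ fun hj₀ => ?_
    obtain ⟨i', hi', hj'⟩ := Set.mem_iUnion₂.mp hj₀
    exact Set.disjoint_left.mp (hdisj i' hi' i hi) hj' hj

end Window

def nonconstant (I A : Type*) : Set (I → A) := {x | ∃ i j, x i ≠ x j}

lemma Generates.mono {A I : Type*} {K K' : Set (Set I)} {L : Set (I → A)} (h : Generates K L)
    (hKK' : K ⊆ K') : Generates K' L := by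
  obtain ⟨B, J, hB, hJ, hJne, f, hf, hfK⟩ := h
  exact ⟨B, J, hB, hJ, hJne, f, hf, hfK.trans hKK'⟩

section Generates

variable {A I : Type*} {K : Set (Set I)}

lemma connectedComplex_of_generates [Nontrivial A] (h : Generates K (nonconstant I A)) :
    ConnectedComplex K := by
  classical
  rintro ⟨I₀, hne, huniv, hsplit⟩
  obtain ⟨B, J, _, _, _, f, hf, hfK⟩ := h
  obtain ⟨i₁, hi₁⟩ := Set.nonempty_iff_ne_empty.mpr hne
  obtain ⟨i₂, hi₂⟩ := (Set.ne_univ_iff_exists_notMem I₀).mp huniv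
  obtain ⟨a₀, a₁, ha⟩ := exists_pair_ne A
  have hdisj : ∀ i ∈ I₀, ∀ i' ∉ I₀, Disjoint (window f i) (window f i') :=
    fun i hi i' hi' => Set.disjoint_left.mpr fun j hj hj' => by
      rcases hsplit _ (hfK (pair_mem_commComplex hj hj')) with hsub | hsub
      · exact hi' (hsub (by simp))
      · exact hsub (by simp) hi
  have hmem : ∀ a b : A, a ≠ b → (fun k => if k ∈ I₀ then a else b) ∈ Set.range f :=
    fun a b hab => hf ▸ ⟨i₁, i₂, by simpa [hi₁, hi₂] using hab⟩
  obtain ⟨u, hu⟩ := hmem a₀ a₁ ha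
  obtain ⟨v, hv⟩ := hmem a₁ a₀ ha.symm
  obtain ⟨w, hwu, hwv⟩ := exists_apply_eq_of_disjoint_window I₀ hdisj u v
  have hconst : ∀ i, f w i = a₀ := fun i => by
    by_cases hi : i ∈ I₀
    · simp [hwu i hi, hu, hi]
    · simp [hwv i hi, hv, hi]
  obtain ⟨i, j, hij⟩ : f w ∈ nonconstant I A := hf ▸ Set.mem_range_self w
  exact hij (by rw [hconst, hconst])

lemma empty_mem_of_generates {L : Set (I → A)} (h : Generates K L) : ∅ ∈ K := by
  obtain ⟨B, J, _, _, _, f, -, hfK⟩ := h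
  exact hfK (empty_mem_commComplex f)

lemma singleton_mem_of_generates [Nontrivial A] [Nontrivial I] (h : Generates K (nonconstant I A))
    (i : I) : {i} ∈ K := by
  classical
  obtain ⟨B, J, _, _, _, f, hf, hfK⟩ := h
  obtain ⟨j, hj⟩ := exists_ne i
  obtain ⟨a₀, a₁, ha⟩ := exists_pair_ne A
  have hmem : ∀ a b : A, a ≠ b → update (fun _ => b) i a ∈ Set.range f :=
    fun a b hab => hf ▸ ⟨i, j, by simpa [update_of_ne hj] using hab⟩
  obtain ⟨x, hx⟩ := hmem a₀ a₁ ha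
  obtain ⟨y, hy⟩ := hmem a₁ a₀ ha.symm
  exact hfK (singleton_mem_commComplex (x := x) (y := y) (by simpa [hx, hy] using ha))

end Generates

section Complex

variable {I : Type*} {K : Set (Set I)} {G H : SimpleGraph I}

lemma pair_mem_of_skeletonGraph_adj {i j : I} (h : (skeletonGraph K).Adj i j) : {i, j} ∈ K := by
  rcases (SimpleGraph.fromRel_adj _ i j).mp h |>.2 with h | h
  · exact h
  · rwa [Set.pair_comm]

lemma isComplex_treeComplex (G : SimpleGraph I) : IsComplex (treeComplex G) := by
  rintro S (rfl | ⟨i, rfl⟩ | ⟨i, j, hij, rfl⟩) T hT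
  · exact Or.inl (Set.subset_empty_iff.mp hT)
  · rcases Set.subset_singleton_iff_eq.mp hT with rfl | rfl
    exacts [Or.inl rfl, Or.inr (Or.inl ⟨i, rfl⟩)]
  · rcases Set.subset_pair_iff_eq.mp hT with rfl | rfl | rfl | rfl
    exacts [Or.inl rfl, Or.inr (Or.inl ⟨i, rfl⟩), Or.inr (Or.inl ⟨j, rfl⟩),
      Or.inr (Or.inr ⟨i, j, hij, rfl⟩)]

lemma ConnectedComplex.connected_of_isClique [Nonempty I] (hK : ConnectedComplex K)
    (hclique : ∀ S ∈ K, H.IsClique S) : H.Connected := by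
  rw [SimpleGraph.connected_iff]
  refine ⟨fun u v => ?_, ‹_›⟩
  by_contra huv
  refine hK ⟨{k | H.Reachable u k}, Set.nonempty_iff_ne_empty.mp ⟨u, .refl u⟩,
    (Set.ne_univ_iff_exists_notMem _).mpr ⟨v, huv⟩, fun S hS => ?_⟩
  by_cases hmeet : ∃ a ∈ S, H.Reachable u a
  · obtain ⟨a, ha, hua⟩ := hmeet
    refine Or.inl fun b hb => ?_
    rcases eq_or_ne a b with rfl | hab
    exacts [hua, hua.trans (hclique S hS ha hb hab).reachable]
  · exact Or.inr fun b hb hub => hmeet ⟨b, hb, hub⟩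

lemma IsComplex.connected_skeletonGraph [Nonempty I] (hK : IsComplex K)
    (hc : ConnectedComplex K) : (skeletonGraph K).Connected :=
  hc.connected_of_isClique fun S hS a ha b hb hab =>
    (SimpleGraph.fromRel_adj _ a b).mpr ⟨hab, Or.inl (hK S hS _ (Set.pair_subset ha hb))⟩

lemma treeComplex_subset [Nontrivial I] (hK : IsComplex K) (hGK : G ≤ skeletonGraph K)
    (hG : G.Connected) : treeComplex G ⊆ K := by
  have hedge : ∀ i j, G.Adj i j → {i, j} ∈ K := fun i j h => pair_mem_of_skeletonGraph_adj (hGK h)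
  have hsingle : ∀ i, {i} ∈ K := fun i => by
    obtain ⟨j, hij⟩ := SimpleGraph.exists_adj_iff_not_isIsolated.mpr
      (hG.preconnected.not_isIsolated i)
    exact hK _ (hedge i j hij) _ (by simp)
  rintro S (rfl | ⟨i, rfl⟩ | ⟨i, j, hij, rfl⟩)
  exacts [hK _ (hsingle (Classical.arbitrary I)) _ (Set.empty_subset _), hsingle i, hedge i j hij]

/-- Removing a tree edge that is missing from `K` would leave `K` inside a disconnected graph. -/
lemma pair_mem_of_isAcyclic [Nonempty I] (hG : G.IsAcyclic) (hKG : K ⊆ treeComplex G)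
    (hK : ConnectedComplex K) {a b : I} (hab : G.Adj a b) : {a, b} ∈ K := by
  by_contra hnot
  refine SimpleGraph.isBridge_iff.mp (SimpleGraph.isAcyclic_iff_forall_adj_isBridge.mp hG hab)
    ((hK.connected_of_isClique fun S hS => ?_).preconnected a b)
  rcases hKG hS with rfl | ⟨i, rfl⟩ | ⟨c, d, hcd, rfl⟩
  · exact SimpleGraph.isClique_empty
  · exact SimpleGraph.isClique_singleton i
  · refine SimpleGraph.isClique_pair.mpr fun _ => SimpleGraph.deleteEdges_adj.mpr ⟨hcd, ?_⟩
    rintro h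
    rcases Sym2.eq_iff.mp (Set.mem_singleton_iff.mp h) with ⟨rfl, rfl⟩ | ⟨rfl, rfl⟩
    · exact hnot hS
    · exact hnot (Set.pair_comm c d ▸ hS)

end Complex

noncomputable def other {A : Type*} [Nontrivial A] (a : A) : A := (exists_ne a).choose

lemma other_ne {A : Type*} [Nontrivial A] (a : A) : other a ≠ a := (exists_ne a).choose_spec

lemma SimpleGraph.Connected.exists_adj_dist_lt {I : Type*} {G : SimpleGraph I} (hG : G.Connected)
    {r i : I} (hi : i ≠ r) : ∃ j, G.Adj i j ∧ G.dist r j < G.dist r i := by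
  obtain ⟨w, hw⟩ := hG.exists_walk_length_eq_dist i r
  cases w with
  | nil => exact absurd rfl hi
  | cons hadj q =>
    refine ⟨_, hadj, ?_⟩
    have hq := SimpleGraph.dist_le q
    rw [SimpleGraph.Walk.length_cons] at hw
    rw [SimpleGraph.dist_comm, SimpleGraph.dist_comm (u := r)]
    omega

/-- A spanning tree of `G` encoded by parent pointers; the depth function rules out cycles. -/
structure RootedSpanningTree {I : Type*} (G : SimpleGraph I) where
  root : I
  parent : I → I
  depth : I → ℕ
  adj_parent : ∀ i ≠ root, G.Adj i (parent i)
  depth_parent_lt : ∀ i ≠ root, depth (parent i) < depth i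

lemma SimpleGraph.Connected.nonempty_rootedSpanningTree {I : Type*} {G : SimpleGraph I}
    (hG : G.Connected) : Nonempty (RootedSpanningTree G) := by
  classical
  obtain ⟨r⟩ := hG.nonempty
  exact ⟨{ root := r
           parent := fun i => if h : i = r then r else (hG.exists_adj_dist_lt h).choose
           depth := G.dist r
           adj_parent := fun i hi => by simpa [hi] using (hG.exists_adj_dist_lt hi).choose_spec.1
           depth_parent_lt := fun i hi => by
             simpa [hi] using (hG.exists_adj_dist_lt hi).choose_spec.2 }⟩

namespace RootedSpanningTree

variable {A I : Type*} {G : SimpleGraph I} (T : RootedSpanningTree G)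

def IsChild (e i : I) : Prop := e ≠ T.root ∧ T.parent e = i

/-- `T.Below j i`: the vertex `j` lies in the subtree rooted at `i`. -/
def Below : I → I → Prop := ReflTransGen T.IsChild

lemma below_root (j : I) : T.Below j T.root := by
  induction j using (measure T.depth).wf.induction with
  | _ j ih =>
    by_cases hj : j = T.root
    · exact hj ▸ ReflTransGen.refl
    · exact ReflTransGen.head ⟨hj, rfl⟩ (ih _ (T.depth_parent_lt j hj))

lemma exists_isChild_of_below {i j : I} (h : T.Below j i) (hji : j ≠ i) :
    ∃ e, T.IsChild e i ∧ T.Below j e := by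
  rcases h.cases_tail with rfl | ⟨e, hje, hei⟩
  exacts [absurd rfl hji, ⟨e, hei, hje⟩]

lemma exists_isChild_root [Nontrivial I] : ∃ e, T.IsChild e T.root := by
  obtain ⟨j, hj⟩ := exists_ne T.root
  obtain ⟨e, he, -⟩ := T.exists_isChild_of_below (T.below_root j) hj
  exact ⟨e, he⟩

/-- The vertex `i` claims that its subtree is not constant; leaves cannot claim. -/
def Claims (x : I → A × Bool) (i : I) : Prop :=
  (i = T.root ∨ (x i).2 = true) ∧ ∃ e, T.IsChild e i

def Refuted (x : I → A × Bool) (i : I) : Prop :=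
  T.Claims x i ∧ ∀ e, T.IsChild e i → ¬ T.Claims x e ∧ (x e).1 = (x i).1

open Classical in
noncomputable def generator [Nontrivial A] (x : I → A × Bool) (i : I) : A :=
  if T.Refuted x i then other (x i).1 else (x i).1

variable {T}

lemma claims_congr {x y : I → A × Bool} {i : I} (h : x i = y i) :
    T.Claims x i ↔ T.Claims y i := by
  simp only [Claims, h]

lemma refuted_congr {x y : I → A × Bool} {i : I} (hi : x i = y i)
    (hchild : ∀ e, T.IsChild e i → x e = y e) : T.Refuted x i ↔ T.Refuted y i := by
  unfold Refuted
  rw [claims_congr hi, hi]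
  exact and_congr_right fun _ => forall_congr' fun e => imp_congr_right fun he => by
    rw [claims_congr (hchild e he), hchild e he]

noncomputable def honestInput (z : I → A) (i : I) : A × Bool :=
  open Classical in (z i, decide (∃ j, T.Below j i ∧ z j ≠ z i))

lemma below_eq_of_not_claims {z : I → A} {e j : I}
    (hnot : ¬ T.Claims (T.honestInput z) e) (hj : T.Below j e) : z j = z e := by
  by_contra hne
  have hje : j ≠ e := fun h => hne (h ▸ rfl)
  obtain ⟨c, hc, -⟩ := T.exists_isChild_of_below hj hje
  exact hnot ⟨Or.inr (by simpa [honestInput] using ⟨j, hj, hne⟩), c, hc⟩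

lemma not_refuted_honestInput {z : I → A} (hz : z ∈ nonconstant I A) (i : I) :
    ¬ T.Refuted (T.honestInput z) i := by
  rintro ⟨hclaim, hchild⟩
  have hsubtree : ∀ j, T.Below j i → z j = z i := by
    intro j hj
    by_cases hji : j = i
    · rw [hji]
    obtain ⟨e, he, hje⟩ := T.exists_isChild_of_below hj hji
    rw [below_eq_of_not_claims (hchild e he).1 hje]
    exact (hchild e he).2
  rcases hclaim.1 with rfl | hflag
  · obtain ⟨j, k, hjk⟩ := hz
    exact hjk (by rw [hsubtree j (T.below_root j), hsubtree k (T.below_root k)])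
  · obtain ⟨j, hj, hne⟩ : ∃ j, T.Below j i ∧ z j ≠ z i := by simpa [honestInput] using hflag
    exact hne (hsubtree j hj)

variable [Nontrivial A]

lemma generator_of_not_refuted {x : I → A × Bool} {i : I} (h : ¬ T.Refuted x i) :
    T.generator x i = (x i).1 :=
  if_neg h

lemma determines_generator (i : I) :
    Determines (T.generator (A := A)) i (insert i {e | T.IsChild e i}) := by
  intro x y h
  have hi : x i = y i := h i (Set.mem_insert _ _)
  unfold generator
  rw [refuted_congr hi fun e he => h e (Set.mem_insert_of_mem _ he), hi]

/-- Each input is read by a vertex and its parent only. -/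
lemma commComplex_generator_subset : commComplex (T.generator (A := A)) ⊆ treeComplex G := by
  rintro S ⟨k, hk⟩
  have hread : ∀ i ∈ S, k = i ∨ T.IsChild k i := fun i hi =>
    window_subset_of_determines (T.determines_generator i) (Set.mem_iInter₂.mp hk i hi)
  by_cases hroot : k = T.root
  · refine isComplex_treeComplex G {k} (Or.inr (Or.inl ⟨k, rfl⟩)) S fun i hi => ?_
    rcases hread i hi with rfl | hchild
    exacts [rfl, absurd hroot hchild.1]
  · refine isComplex_treeComplex G {k, T.parent k}
      (Or.inr (Or.inr ⟨k, _, T.adj_parent k hroot, rfl⟩)) S fun i hi => ?_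
    rcases hread i hi with rfl | hchild
    exacts [Or.inl rfl, Or.inr hchild.2.symm]

/-- A deepest claiming vertex disagrees in the output with one of its children. -/
lemma generator_mem_nonconstant [Finite I] [Nontrivial I] (x : I → A × Bool) :
    T.generator x ∈ nonconstant I A := by
  obtain ⟨m, hm, hmax⟩ := Set.exists_max_image {i | T.Claims x i} T.depth (Set.toFinite _)
    ⟨T.root, Or.inl rfl, T.exists_isChild_root⟩
  have hchild : ∀ e, T.IsChild e m → ¬ T.Claims x e ∧ T.generator x e = (x e).1 := by
    intro e he
    have hnot : ¬ T.Claims x e := fun hc =>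
      absurd (hmax e hc) (not_le.mpr (he.2 ▸ T.depth_parent_lt e he.1))
    exact ⟨hnot, generator_of_not_refuted fun hr => hnot hr.1⟩
  obtain ⟨e, he⟩ := hm.2
  by_cases hagree : ∀ e, T.IsChild e m → (x e).1 = (x m).1
  · have hm_gen : T.generator x m = other (x m).1 :=
      if_pos ⟨hm, fun e he => ⟨(hchild e he).1, hagree e he⟩⟩
    refine ⟨m, e, ?_⟩
    rw [hm_gen, (hchild e he).2, hagree e he]
    exact other_ne _
  · push Not at hagree
    obtain ⟨e', he', hne⟩ := hagree
    refine ⟨e', m, ?_⟩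
    rw [(hchild e' he').2, generator_of_not_refuted fun hr => hne (hr.2 e' he').2]
    exact hne

lemma range_generator [Finite I] [Nontrivial I] :
    Set.range T.generator = nonconstant I A := by
  refine Set.Subset.antisymm (Set.range_subset_iff.mpr T.generator_mem_nonconstant)
    fun z hz => ⟨T.honestInput z, funext fun i => ?_⟩
  exact generator_of_not_refuted (T.not_refuted_honestInput hz i)

end RootedSpanningTree

theorem generates_treeComplex {A I : Type} [Finite A] [Finite I] [Nontrivial A] [Nontrivial I]
    {G : SimpleGraph I} (hG : G.Connected) : Generates (treeComplex G) (nonconstant I A) := by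
  obtain ⟨T⟩ := hG.nonempty_rootedSpanningTree
  exact ⟨A × Bool, I, inferInstance, inferInstance, ⟨T.root⟩, T.generator, T.range_generator,
    T.commComplex_generator_subset⟩

lemma treeComplex_subset_of_generates {A I : Type*} [Nontrivial A] [Nontrivial I]
    {G : SimpleGraph I} {K : Set (Set I)} (hG : G.IsAcyclic) (hKG : K ⊆ treeComplex G)
    (hgen : Generates K (nonconstant I A)) : treeComplex G ⊆ K := by
  rintro S (rfl | ⟨i, rfl⟩ | ⟨a, b, hab, rfl⟩)
  · exact empty_mem_of_generates hgen
  · exact singleton_mem_of_generates hgen i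
  · exact pair_mem_of_isAcyclic hG hKG (connectedComplex_of_generates hgen) hab

/-- a simplicial complex generates the language of non-constant
sequences iff it is connected; the minimal generating complexes are the
spanning trees of `I`. -/
theorem stmt15 {A I : Type} [Finite A] [Finite I] (hA : 2 ≤ Nat.card A)
    (hI : 2 ≤ Nat.card I) (K : Set (Set I)) (hK : IsComplex K) :
    (Generates K {x : I → A | ∃ i j, x i ≠ x j} ↔ ConnectedComplex K) ∧
    ((Generates K {x : I → A | ∃ i j, x i ≠ x j} ∧
        ∀ K' ⊆ K, Generates K' {x : I → A | ∃ i j, x i ≠ x j} → K' = K) ↔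
      ∃ G : SimpleGraph I, G.IsTree ∧ K = treeComplex G) := by
  have : Nontrivial A := Finite.one_lt_card_iff_nontrivial.mp hA
  have : Nontrivial I := Finite.one_lt_card_iff_nontrivial.mp hI
  refine ⟨⟨connectedComplex_of_generates, fun hc => ?_⟩, ⟨fun ⟨hgen, hmin⟩ => ?_, ?_⟩⟩
  · have hskel := hK.connected_skeletonGraph hc
    exact (generates_treeComplex hskel).mono (treeComplex_subset hK le_rfl hskel)
  · obtain ⟨T, hTK, hT⟩ :=
      (hK.connected_skeletonGraph (connectedComplex_of_generates hgen)).exists_isTree_le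
    exact ⟨T, hT, (hmin _ (treeComplex_subset hK hTK hT.connected)
      (generates_treeComplex hT.connected)).symm⟩
  · rintro ⟨G, hG, rfl⟩
    exact ⟨generates_treeComplex hG.connected, fun K' hK' hgen =>
      hK'.antisymm (treeComplex_subset_of_generates hG.isAcyclic hK' hgen)⟩
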